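/- arXiv:1806.00900 — 2 statements merged into one kernel-verified Lean document; each statement's English description precedes it below -/
import Mathlib

section
/- Let U ∈ ℝ^{d₁×r}, V ∈ ℝ^{d₂×r}, M* ∈ ℝ^{d₁×d₂}, η ≥ 0, and define one gradient descent step U₊ = U − η(UVᵀ − M*)V and V₊ = V − η(UVᵀ − M*)ᵀU. Then ‖U₊ᵀU₊ − V₊ᵀV₊‖_F ≤ ‖UᵀU − VᵀV‖_F + η²·(‖U‖_F² + ‖V‖_F²)·‖UVᵀ − M*‖_F². (In particular, one GD step changes the balancedness quantity UᵀU − VᵀV only by an O(η²) term.) -/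
open Matrix

/-- Frobenius norm of a real matrix. -/
noncomputable def frob {m n : Type*} [Fintype m] [Fintype n] (A : Matrix m n ℝ) : ℝ :=
  Real.sqrt (∑ i, ∑ j, A i j ^ 2)

/-!
The first-order terms of the step cancel in `U₊ᵀU₊ − V₊ᵀV₊`: with `E = UVᵀ − M*` both Gram
matrices pick up `−η(UᵀEV + VᵀEᵀU)`, which is why gradient flow conserves `UᵀU − VᵀV` exactly.
What remains is `η²((EV)ᵀ(EV) − (EᵀU)ᵀ(EᵀU))`, and submultiplicativity of the Frobenius norm
bounds it by `η²(‖U‖² + ‖V‖²)‖E‖²`.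
-/

attribute [local instance] Matrix.frobeniusNormedAddCommGroup Matrix.frobeniusNormedSpace

lemma frob_eq_norm {m n : Type*} [Fintype m] [Fintype n] (A : Matrix m n ℝ) :
    frob A = ‖A‖ := by
  rw [frob, frobenius_norm_def, Real.sqrt_eq_rpow]
  simp [sq_abs]

section Identity

variable {m n k R : Type*} [Fintype m] [Fintype n] [CommRing R]

theorem gram_sub_gram_gradient_step (U : Matrix m k R) (V : Matrix n k R) (E : Matrix m n R)
    (η : R) :
    (U - η • (E * V))ᵀ * (U - η • (E * V)) - (V - η • (Eᵀ * U))ᵀ * (V - η • (Eᵀ * U))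
      = Uᵀ * U - Vᵀ * V + η ^ 2 • ((E * V)ᵀ * (E * V) - (Eᵀ * U)ᵀ * (Eᵀ * U)) := by
  simp only [transpose_sub, transpose_smul, transpose_mul, transpose_transpose,
    Matrix.sub_mul, Matrix.mul_sub, Matrix.smul_mul, Matrix.mul_smul, smul_smul, smul_sub, Matrix.mul_assoc, sq]
  abel

end Identity

section FrobeniusBounds

variable {l m n : Type*} [Fintype l] [Fintype m] [Fintype n]

lemma frobenius_norm_transpose_mul_self_le (A : Matrix m n ℝ) : ‖Aᵀ * A‖ ≤ ‖A‖ ^ 2 := by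
  simpa only [frobenius_norm_transpose, sq] using frobenius_norm_mul Aᵀ A

lemma frobenius_norm_mul_sq_le (A : Matrix l m ℝ) (B : Matrix m n ℝ) :
    ‖A * B‖ ^ 2 ≤ ‖A‖ ^ 2 * ‖B‖ ^ 2 := by
  rw [← mul_pow]
  gcongr
  exact frobenius_norm_mul A B

lemma frobenius_norm_gram_sub_gram_le {k : Type*} [Fintype k] (U : Matrix m k ℝ)
    (V : Matrix n k ℝ) (E : Matrix m n ℝ) :
    ‖(E * V)ᵀ * (E * V) - (Eᵀ * U)ᵀ * (Eᵀ * U)‖ ≤ (‖U‖ ^ 2 + ‖V‖ ^ 2) * ‖E‖ ^ 2 :=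
  calc ‖(E * V)ᵀ * (E * V) - (Eᵀ * U)ᵀ * (Eᵀ * U)‖
      ≤ ‖E * V‖ ^ 2 + ‖Eᵀ * U‖ ^ 2 :=
        (norm_sub_le _ _).trans (add_le_add (frobenius_norm_transpose_mul_self_le _)
          (frobenius_norm_transpose_mul_self_le _))
    _ ≤ ‖E‖ ^ 2 * ‖V‖ ^ 2 + ‖Eᵀ‖ ^ 2 * ‖U‖ ^ 2 :=
        add_le_add (frobenius_norm_mul_sq_le _ _) (frobenius_norm_mul_sq_le _ _)
    _ = (‖U‖ ^ 2 + ‖V‖ ^ 2) * ‖E‖ ^ 2 := by rw [frobenius_norm_transpose]; ring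

end FrobeniusBounds

theorem gd_step_balancedness_general {d₁ d₂ r : ℕ}
    (U : Matrix (Fin d₁) (Fin r) ℝ) (V : Matrix (Fin d₂) (Fin r) ℝ)
    (M : Matrix (Fin d₁) (Fin d₂) ℝ) (η : ℝ)
    (Up : Matrix (Fin d₁) (Fin r) ℝ) (Vp : Matrix (Fin d₂) (Fin r) ℝ)
    (hUp : Up = U - η • ((U * Vᵀ - M) * V))
    (hVp : Vp = V - η • ((U * Vᵀ - M)ᵀ * U)) :
    frob (Upᵀ * Up - Vpᵀ * Vp)
      ≤ frob (Uᵀ * U - Vᵀ * V)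
        + η ^ 2 * (frob U ^ 2 + frob V ^ 2) * frob (U * Vᵀ - M) ^ 2 := by
  set E := U * Vᵀ - M
  subst hUp hVp
  rw [gram_sub_gram_gradient_step]
  simp only [frob_eq_norm]
  calc ‖Uᵀ * U - Vᵀ * V + η ^ 2 • ((E * V)ᵀ * (E * V) - (Eᵀ * U)ᵀ * (Eᵀ * U))‖
      ≤ ‖Uᵀ * U - Vᵀ * V‖ + η ^ 2 * ‖(E * V)ᵀ * (E * V) - (Eᵀ * U)ᵀ * (Eᵀ * U)‖ := by
        refine (norm_add_le _ _).trans_eq ?_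
        rw [norm_smul, Real.norm_of_nonneg (sq_nonneg η)]
    _ ≤ ‖Uᵀ * U - Vᵀ * V‖ + η ^ 2 * (‖U‖ ^ 2 + ‖V‖ ^ 2) * ‖E‖ ^ 2 := by
        rw [mul_assoc]
        gcongr
        exact frobenius_norm_gram_sub_gram_le U V E

/-- One gradient descent step on `f(U,V) = ½‖UVᵀ − M*‖_F²` changes the balancedness
quantity `UᵀU − VᵀV` by at most an `η²` term. -/
theorem gd_step_balancedness {d₁ d₂ r : ℕ}
    (U : Matrix (Fin d₁) (Fin r) ℝ) (V : Matrix (Fin d₂) (Fin r) ℝ)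
    (M : Matrix (Fin d₁) (Fin d₂) ℝ) (η : ℝ) (hη : 0 ≤ η)
    (Up : Matrix (Fin d₁) (Fin r) ℝ) (Vp : Matrix (Fin d₂) (Fin r) ℝ)
    (hUp : Up = U - η • ((U * Vᵀ - M) * V))
    (hVp : Vp = V - η • ((U * Vᵀ - M)ᵀ * U)) :
    frob (Upᵀ * Up - Vpᵀ * Vp)
      ≤ frob (Uᵀ * U - Vᵀ * V)
        + η ^ 2 * (frob U ^ 2 + frob V ^ 2) * frob (U * Vᵀ - M) ^ 2 :=
  gd_step_balancedness_general U V M η Up Vp hUp hVp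
end

section
/- Let U, U* ∈ ℝ^{d₁×r}, V, V* ∈ ℝ^{d₂×r}, set M = UVᵀ and M* = U*V*ᵀ, and let R ∈ ℝ^{r×r} be orthogonal (RRᵀ = I). Suppose (U, V) satisfies the first-order stationarity conditions (M − M*)V = 0 and (M − M*)ᵀU = 0. Then with Δ_U = U − U*R and Δ_V = V − V*R, we have ⟨M − M*, Δ_U Δ_Vᵀ⟩ = −‖M − M*‖_F². -/
open Matrix

/-- Trace inner product `⟨A, B⟩ = tr(AᵀB)` of real matrices. -/
def minner {m n : Type*} [Fintype m] [Fintype n] (A B : Matrix m n ℝ) : ℝ :=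
  ∑ i, ∑ j, A i j * B i j

/-!
Write `E = M − M*`. Because `RRᵀ = I`, `(U*R)(V*R)ᵀ = M*`, and expanding the product gives
`Δ_U Δ_Vᵀ = U Δ_Vᵀ + Δ_U Vᵀ − E`. Stationarity kills the first two terms against `E`:
`⟨E, U Δ_Vᵀ⟩ = ⟨EᵀU, Δ_V⟩ = 0` and `⟨E, Δ_U Vᵀ⟩ = ⟨EV, Δ_U⟩ = 0`, leaving `−⟨E, E⟩ = −‖E‖_F²`.
-/

section TraceInner

variable {m n k : Type*} [Fintype m] [Fintype n] [Fintype k]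

lemma minner_eq_trace (A B : Matrix m n ℝ) : minner A B = (Aᵀ * B).trace := by
  simp only [minner, trace, diag, mul_apply, transpose_apply]
  rw [Finset.sum_comm]

lemma frob_sq (A : Matrix m n ℝ) : frob A ^ 2 = minner A A := by
  rw [frob, Real.sq_sqrt (by positivity), minner]
  simp only [sq]

lemma minner_zero_left (B : Matrix m n ℝ) : minner 0 B = 0 := by
  simp [minner]

lemma minner_add_right (A B C : Matrix m n ℝ) : minner A (B + C) = minner A B + minner A C := by
  simp only [minner_eq_trace, Matrix.mul_add, trace_add]

lemma minner_sub_right (A B C : Matrix m n ℝ) : minner A (B - C) = minner A B - minner A C := by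
  simp only [minner_eq_trace, Matrix.mul_sub, trace_sub]

lemma minner_transpose (A B : Matrix m n ℝ) : minner Aᵀ Bᵀ = minner A B := by
  simp only [minner, transpose_apply]
  exact Finset.sum_comm

lemma minner_mul_transpose_right (A : Matrix m n ℝ) (B : Matrix m k ℝ) (C : Matrix n k ℝ) :
    minner A (B * Cᵀ) = minner (A * C) B := by
  rw [minner_eq_trace, minner_eq_trace, ← Matrix.mul_assoc, trace_mul_comm, transpose_mul,
    Matrix.mul_assoc]

end TraceInner

lemma sub_mul_transpose_sub {m n k α : Type*} [Fintype k] [CommRing α]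
    (U A : Matrix m k α) (V B : Matrix n k α) :
    (U - A) * (V - B)ᵀ = U * (V - B)ᵀ + (U - A) * Vᵀ - (U * Vᵀ - A * Bᵀ) := by
  simp only [transpose_sub, Matrix.mul_sub, Matrix.sub_mul]
  abel

lemma mul_mul_transpose_mul_of_mul_transpose_eq_one {m n k α : Type*} [Fintype k] [DecidableEq k]
    [CommRing α] (A : Matrix m k α) (B : Matrix n k α) {R : Matrix k k α} (hR : R * Rᵀ = 1) :
    A * R * (B * R)ᵀ = A * Bᵀ := by
  rw [transpose_mul, Matrix.mul_assoc, ← Matrix.mul_assoc R, hR, Matrix.one_mul]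

/-- At a first-order stationary point `(U,V)` of `½‖UVᵀ − M*‖_F²` with `M* = U*V*ᵀ`,
for an orthogonal `R` and `Δ_U = U − U*R`, `Δ_V = V − V*R`, one has
`⟨M − M*, Δ_U Δ_Vᵀ⟩ = −‖M − M*‖_F²`. -/
theorem stationary_inner_eq_neg_sq {d₁ d₂ r : ℕ}
    (U Us : Matrix (Fin d₁) (Fin r) ℝ) (V Vs : Matrix (Fin d₂) (Fin r) ℝ)
    (R : Matrix (Fin r) (Fin r) ℝ) (hR : R * Rᵀ = 1)
    (hstat₁ : (U * Vᵀ - Us * Vsᵀ) * V = 0)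
    (hstat₂ : (U * Vᵀ - Us * Vsᵀ)ᵀ * U = 0) :
    minner (U * Vᵀ - Us * Vsᵀ) ((U - Us * R) * (V - Vs * R)ᵀ)
      = -(frob (U * Vᵀ - Us * Vsᵀ) ^ 2) := by
  set E := U * Vᵀ - Us * Vsᵀ
  have hU : minner E (U * (V - Vs * R)ᵀ) = 0 := by
    rw [← minner_transpose, transpose_mul, minner_mul_transpose_right, hstat₂, minner_zero_left]
  have hV : minner E ((U - Us * R) * Vᵀ) = 0 := by
    rw [minner_mul_transpose_right, hstat₁, minner_zero_left]
  rw [sub_mul_transpose_sub, mul_mul_transpose_mul_of_mul_transpose_eq_one Us Vs hR,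
    minner_sub_right, minner_add_right, hU, hV, frob_sq]
  ring
end
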